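/- Let n be an odd positive integer and q = 2^n, and let ∘ denote the symplectic Knuth presemifield multiplication on F_q. Then for every nonzero x ∈ F_q, the set {m ∈ F_q : x ∘ m² + m = 0} has exactly 2 elements. (This expresses that the set of lines {l_{m²,m} : m ∈ F_q} ∪ {l_0, l_∞} is a line hyperoval in the symplectic presemifield plane Π(K_n^{td}).) -/

import Mathlib

/-!
Since `(m²) ^ 2 ^ (n - 1) = m` and `Tr (x² m²) = Tr (x m)`, the equation `x ∘ m² + m = 0`
reads `x m² + Tr x · m + Tr (x m) + m = 0`, and `Tr` only takes the values `0` and `1`.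
If `Tr x = 1` it becomes `x m² = Tr (x m)`: besides `m = 0` the only solution is `m = 1 / √x`,
which works because `Tr (√x) = Tr x = 1`.
If `Tr x = 0`, multiplying by `x` turns it into `v² + v = x · Tr v` for `v = x m`: besides `v = 0`
the only solution is the root `u` of `u² + u = x` with `Tr u = 1`. Such a root exists by
additive Hilbert 90, and exactly one of the two roots `u`, `u + 1` has trace `1` because
`Tr 1 = 1` for odd `n`.
-/

open Finset

def absTrace {R : Type*} [CommSemiring R] (n : ℕ) (x : R) : R :=
  ∑ i ∈ range n, x ^ 2 ^ i

def knuthMul {R : Type*} [CommSemiring R] (n : ℕ) (x y : R) : R :=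
  x * y + absTrace n x * y ^ 2 ^ (n - 1) + absTrace n (x ^ 2 * y)

section CommSemiring

variable {R : Type*} [CommSemiring R] (n : ℕ)

@[simp]
theorem absTrace_zero : absTrace n (0 : R) = 0 :=
  sum_eq_zero fun _ _ => zero_pow (pow_ne_zero _ two_ne_zero)

theorem absTrace_sq_add_self (x : R) : absTrace n (x ^ 2) + x = absTrace n x + x ^ 2 ^ n := by
  have h : ∀ i, (x ^ 2) ^ 2 ^ i = x ^ 2 ^ (i + 1) := fun i => by rw [← pow_mul, pow_succ']
  have := (sum_range_succ' (fun i => x ^ 2 ^ i) n).symm.trans (sum_range_succ _ n)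
  rw [pow_zero, pow_one] at this
  simpa only [absTrace, h] using this

end CommSemiring

section CharTwo

variable {R : Type*} [CommRing R] [CharP R 2] (n : ℕ)

theorem absTrace_add (x y : R) : absTrace n (x + y) = absTrace n x + absTrace n y := by
  simp only [absTrace, add_pow_char_pow, sum_add_distrib]

theorem sq_absTrace (x : R) : absTrace n x ^ 2 = absTrace n (x ^ 2) := by
  simp only [absTrace, CharTwo.sum_sq, ← pow_mul, mul_comm]

theorem absTrace_one {n : ℕ} (hn : Odd n) : absTrace n (1 : R) = 1 := by
  simp [absTrace, CharTwo.natCast_eq_ite, Nat.not_even_iff_odd.mpr hn]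

theorem sq_add_self_eq_sq_add_self_iff [NoZeroDivisors R] {a b : R} :
    a ^ 2 + a = b ^ 2 + b ↔ a = b ∨ a = b + 1 := by
  have h : a ^ 2 + a - (b ^ 2 + b) = (a - b) * (a - (b + 1)) := by
    linear_combination (a + a * b - b ^ 2 - b) * CharTwo.two_eq_zero (R := R)
  rw [← sub_eq_zero, h, mul_eq_zero, sub_eq_zero, sub_eq_zero]

theorem sq_add_self_eq_zero_iff [NoZeroDivisors R] {a : R} : a ^ 2 + a = 0 ↔ a = 0 ∨ a = 1 := by
  simpa using sq_add_self_eq_sq_add_self_iff (b := (0 : R))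

end CharTwo

section FiniteField

variable {F : Type*} [Field F] [Fintype F] {n : ℕ}

theorem pow_two_pow_eq_self (hF : Fintype.card F = 2 ^ n) (x : F) : x ^ 2 ^ n = x :=
  hF ▸ FiniteField.pow_card x

theorem absTrace_sq (hF : Fintype.card F = 2 ^ n) (x : F) : absTrace n (x ^ 2) = absTrace n x :=
  add_right_cancel ((absTrace_sq_add_self n x).trans (by rw [pow_two_pow_eq_self hF]))

theorem absTrace_eq_zero_or_one (hF : Fintype.card F = 2 ^ n) (x : F) :
    absTrace n x = 0 ∨ absTrace n x = 1 := by
  have := charP_of_card_eq_prime_pow (p := 2) hF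
  refine IsIdempotentElem.iff_eq_zero_or_one.mp ?_
  rw [IsIdempotentElem, ← sq, sq_absTrace, absTrace_sq hF]

-- Additive Hilbert 90: `u ↦ u ^ 2 + u` has kernel `{0, 1}`, so its image has index 2 and lies in
-- the kernel of the trace, which is a proper subgroup because `absTrace n 1 = 1`.
theorem exists_sq_add_self_eq_of_absTrace_eq_zero (hF : Fintype.card F = 2 ^ n) (hn : Odd n)
    {z : F} (hz : absTrace n z = 0) : ∃ u, u ^ 2 + u = z := by
  have := charP_of_card_eq_prime_pow (p := 2) hF
  let T : F →+ F := AddMonoidHom.mk' (absTrace n) (absTrace_add n)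
  let φ : F →+ F := (frobenius F 2).toAddMonoidHom + AddMonoidHom.id F
  have hφT : φ.range ≤ T.ker := by
    rintro _ ⟨u, rfl⟩
    simp [T, φ, frobenius_def, absTrace_add, absTrace_sq hF, CharTwo.add_self_eq_zero]
  have hker : Nat.card φ.ker ≤ 2 := by
    have hsub : (φ.ker : Set F) ⊆ {0, 1} := fun u hu => by
      simpa using sq_add_self_eq_zero_iff.mp (by simpa [φ, frobenius_def] using hu)
    rw [← SetLike.coe_sort_coe, Nat.card_coe_set_eq, ← Set.ncard_pair (zero_ne_one' F)]
    exact Set.ncard_le_ncard hsub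
  have hrange : 2 ≤ Nat.card T.range := by
    have hsub : ({0, 1} : Set F) ⊆ T.range := by
      rintro _ (rfl | rfl)
      · exact T.range.zero_mem
      · exact ⟨1, absTrace_one hn⟩
    rw [← SetLike.coe_sort_coe, Nat.card_coe_set_eq, ← Set.ncard_pair (zero_ne_one' F)]
    exact Set.ncard_le_ncard hsub
  have hcard : Nat.card T.ker ≤ Nat.card φ.range := by
    have : Nat.card T.ker * 2 ≤ 2 * Nat.card φ.range := calc
      Nat.card T.ker * 2 ≤ Nat.card T.ker * Nat.card T.range := Nat.mul_le_mul_left _ hrange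
      _ = Nat.card φ.ker * Nat.card φ.range := by
        rw [← AddSubgroup.index_ker, ← AddSubgroup.index_ker, AddSubgroup.card_mul_index,
          AddSubgroup.card_mul_index]
      _ ≤ 2 * Nat.card φ.range := Nat.mul_le_mul_right _ hker
    omega
  obtain ⟨u, hu⟩ := (AddSubgroup.eq_of_le_of_card_ge hφT hcard).ge hz
  exact ⟨u, by simpa [φ, frobenius_def] using hu⟩

theorem exists_sq_add_self_eq_and_absTrace_eq_one (hF : Fintype.card F = 2 ^ n) (hn : Odd n)
    {x : F} (hx : absTrace n x = 0) : ∃ u, u ^ 2 + u = x ∧ absTrace n u = 1 := by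
  have := charP_of_card_eq_prime_pow (p := 2) hF
  obtain ⟨u, hu⟩ := exists_sq_add_self_eq_of_absTrace_eq_zero hF hn hx
  rcases absTrace_eq_zero_or_one hF u with hTu | hTu
  · refine ⟨u + 1, by linear_combination hu + (u + 1) * CharTwo.two_eq_zero (R := F), ?_⟩
    rw [absTrace_add, hTu, absTrace_one hn, zero_add]
  · exact ⟨u, hu, hTu⟩

theorem knuthMul_sq_add_self (hF : Fintype.card F = 2 ^ n) (x m : F) :
    knuthMul n x (m ^ 2) + m = x * m ^ 2 + absTrace n x * m + absTrace n (x * m) + m := by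
  have hn : n ≠ 0 := by
    rintro rfl
    exact (Fintype.one_lt_card (α := F)).ne' hF
  have hsqrt : (m ^ 2) ^ 2 ^ (n - 1) = m := by
    rw [← pow_mul, ← pow_succ', Nat.sub_add_cancel (Nat.one_le_iff_ne_zero.mpr hn),
      pow_two_pow_eq_self hF]
  rw [knuthMul, hsqrt, ← mul_pow, absTrace_sq hF]

theorem sq_add_self_eq_mul_absTrace_iff (hF : Fintype.card F = 2 ^ n) (hn : Odd n) {x u : F}
    (hu : u ^ 2 + u = x) (hTu : absTrace n u = 1) (v : F) :
    v ^ 2 + v = x * absTrace n v ↔ v = 0 ∨ v = u := by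
  have := charP_of_card_eq_prime_pow (p := 2) hF
  rcases absTrace_eq_zero_or_one hF v with hTv | hTv
  · rw [hTv, mul_zero, sq_add_self_eq_zero_iff]
    constructor <;> rintro (rfl | rfl) <;> simp_all [absTrace_one hn]
  · rw [hTv, mul_one, ← hu, sq_add_self_eq_sq_add_self_iff]
    constructor <;> rintro (rfl | rfl) <;>
      simp_all [absTrace_add, absTrace_one hn, CharTwo.add_self_eq_zero]

theorem setOf_knuthMul_sq_add_self_eq_zero_of_absTrace_eq_zero (hF : Fintype.card F = 2 ^ n)
    (hn : Odd n) {x u : F} (hx : x ≠ 0) (hTx : absTrace n x = 0) (hu : u ^ 2 + u = x)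
    (hTu : absTrace n u = 1) :
    {m | knuthMul n x (m ^ 2) + m = 0} = {0, u / x} := by
  have := charP_of_card_eq_prime_pow (p := 2) hF
  ext m
  have hmul : x * (x * m ^ 2 + absTrace n (x * m) + m)
      = ((x * m) ^ 2 + x * m) + x * absTrace n (x * m) := by ring
  rw [Set.mem_ofPred_eq, knuthMul_sq_add_self hF, hTx, zero_mul, add_zero, ← mul_right_inj' hx,
    mul_zero, hmul, CharTwo.add_eq_zero, sq_add_self_eq_mul_absTrace_iff hF hn hu hTu,
    Set.mem_insert_iff, Set.mem_singleton_iff, eq_div_iff hx, mul_eq_zero, mul_comm m]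
  simp [hx]

theorem setOf_knuthMul_sq_add_self_eq_zero_of_absTrace_eq_one (hF : Fintype.card F = 2 ^ n)
    {x r : F} (hTx : absTrace n x = 1) (hr : x * r ^ 2 = 1) :
    {m | knuthMul n x (m ^ 2) + m = 0} = {0, r} := by
  have := charP_of_card_eq_prime_pow (p := 2) hF
  have hTxr : absTrace n (x * r) = 1 := by
    rw [← absTrace_sq hF, mul_pow, sq x, mul_assoc, hr, mul_one, hTx]
  ext m
  rw [Set.mem_ofPred_eq, knuthMul_sq_add_self hF, hTx, Set.mem_insert_iff, Set.mem_singleton_iff]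
  constructor
  · intro h
    rcases absTrace_eq_zero_or_one hF (x * m) with hTxm | hTxm
    · left
      rw [hTxm] at h
      have : m ^ 2 = 0 := by
        linear_combination r ^ 2 * h - m ^ 2 * hr - m * r ^ 2 * CharTwo.two_eq_zero (R := F)
      exact pow_eq_zero_iff two_ne_zero |>.mp this
    · right
      rw [hTxm] at h
      refine CharTwo.sq_inj.mp ?_
      linear_combination r ^ 2 * h - m ^ 2 * hr - (m + 1) * r ^ 2 * CharTwo.two_eq_zero (R := F)
  · rintro (rfl | hm)
    · simp
    · rw [hm, hTxr]
      linear_combination hr + (1 + r) * CharTwo.two_eq_zero (R := F)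

end FiniteField

theorem line_hyperoval_standard_general
    (n : ℕ) (hn : Odd n)
    {F : Type*} [Field F] [Fintype F] (hF : Fintype.card F = 2 ^ n)
    (Tr : F → F) (hTr : ∀ x : F, Tr x = ∑ i ∈ Finset.range n, x ^ 2 ^ i)
    (smul : F → F → F)
    (hsmul : ∀ x y : F, smul x y = x * y + Tr x * y ^ 2 ^ (n - 1) + Tr (x ^ 2 * y)) :
    ∀ x : F, x ≠ 0 → ({m : F | smul x (m ^ 2) + m = 0}).ncard = 2 := by
  obtain rfl : Tr = absTrace n := funext hTr
  obtain rfl : smul = knuthMul n := funext₂ hsmul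
  intro x hx
  have := charP_of_card_eq_prime_pow (p := 2) hF
  rcases absTrace_eq_zero_or_one hF x with hTx | hTx
  · obtain ⟨u, hu, hTu⟩ := exists_sq_add_self_eq_and_absTrace_eq_one hF hn hTx
    have hu0 : u ≠ 0 := by
      rintro rfl
      simp at hTu
    rw [setOf_knuthMul_sq_add_self_eq_zero_of_absTrace_eq_zero hF hn hx hTx hu hTu,
      Set.ncard_pair (div_ne_zero hu0 hx).symm]
  · obtain ⟨r, hr⟩ := FiniteField.isSquare_of_char_two (ringChar.eq F 2) x⁻¹
    have hr0 : r ≠ 0 := by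
      rintro rfl
      simp [hx] at hr
    rw [setOf_knuthMul_sq_add_self_eq_zero_of_absTrace_eq_one hF hTx
      (by rw [sq, ← hr, mul_inv_cancel₀ hx]), Set.ncard_pair hr0.symm]

/-- Corollary 3.2: in the symplectic Knuth presemifield plane `Π(K_n^{td})`, the set of
lines `{l_{m²,m} : m ∈ F_q} ∪ {l_0, l_∞}` is a line hyperoval.  Analytically: for every
nonzero `x ∈ F_q`, the equation `x ∘ m² + m = 0` has exactly `2` solutions `m ∈ F_q`. -/
theorem line_hyperoval_standard
    (n : ℕ) (hn : Odd n) (hn0 : 0 < n)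
    {F : Type*} [Field F] [Fintype F] (hF : Fintype.card F = 2 ^ n)
    (Tr : F → F) (hTr : ∀ x : F, Tr x = ∑ i ∈ Finset.range n, x ^ 2 ^ i)
    (smul : F → F → F)
    (hsmul : ∀ x y : F, smul x y = x * y + Tr x * y ^ 2 ^ (n - 1) + Tr (x ^ 2 * y)) :
    ∀ x : F, x ≠ 0 → ({m : F | smul x (m ^ 2) + m = 0}).ncard = 2 :=
  line_hyperoval_standard_general n hn hF Tr hTr smul hsmul
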